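/- Let G be a finite simple graph with at least one vertex, let k ≥ 0 be an integer, let p = χ(G) + k, and let σ be a proper colouring of G using exactly p colours. Then for every colour class U of σ there exists a set X ⊆ V(G) with |X| ≤ k+1 and X ∩ U ≠ ∅ such that the closed neighbourhood N[X] meets every colour class of σ, i.e. |σ(N[X])| = p. -/

import Mathlib

open SimpleGraph

/-- `σ` is a proper colouring of `G` with colours in `ℕ`. -/
def IsProperColoring {V : Type*} (G : SimpleGraph V) (σ : V → ℕ) : Prop :=
  ∀ ⦃u v : V⦄, G.Adj u v → σ u ≠ σ v

/-- The chromatic number of `G`, as a natural number. -/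
noncomputable def chromNum {V : Type*} (G : SimpleGraph V) : ℕ :=
  sInf {n : ℕ | G.Colorable n}

/-- The discrepancy `φ_σ(G)` of a proper colouring `σ` of `G`: the maximum, over all
induced subgraphs `G[S]` of `G`, of `|σ(S)| - χ(G[S])`. -/
noncomputable def colDisc {V : Type*} (G : SimpleGraph V) (σ : V → ℕ) : ℤ :=
  sSup {z : ℤ | ∃ S : Set V, z = ((σ '' S).ncard : ℤ) - (chromNum (G.induce S) : ℤ)}

/-- The chromatic discrepancy `φ(G)`: the minimum of `φ_σ(G)` over all proper
colourings `σ` of `G`. -/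
noncomputable def chromDisc {V : Type*} (G : SimpleGraph V) : ℤ :=
  sInf {z : ℤ | ∃ σ : V → ℕ, IsProperColoring G σ ∧ z = colDisc G σ}

/-- `G` is locally `s`-colourable: the closed neighbourhood of every vertex induces an
`s`-colourable subgraph. -/
def LocallyColorable {V : Type*} (G : SimpleGraph V) (s : ℕ) : Prop :=
  ∀ v : V, chromNum (G.induce (insert v (G.neighborSet v))) ≤ s

/-- The set of vertices at distance at most `r` from `v` in `G`. -/
def ballSet {V : Type*} (G : SimpleGraph V) (v : V) (r : ℕ) : Set V :=
  {u : V | ∃ w : G.Walk v u, w.length ≤ r}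

/-- `G` is `r`-locally `s`-colourable: every ball of radius `r` induces an
`s`-colourable subgraph. -/
def RLocallyColorable {V : Type*} (G : SimpleGraph V) (r s : ℕ) : Prop :=
  ∀ v : V, chromNum (G.induce (ballSet G v r)) ≤ s

/-- `G` contains no cycle of length exactly `n` as a (not necessarily induced) subgraph. -/
def CycleLenFree {V : Type*} (G : SimpleGraph V) (n : ℕ) : Prop :=
  ∀ (v : V) (w : G.Walk v v), w.IsCycle → w.length ≠ n

/-- `H` is `k`-degenerate: every non-empty (induced) subgraph contains a vertex of
degree at most `k` in it. -/
def Degenerate {α : Type*} (H : SimpleGraph α) (k : ℕ) : Prop :=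
  ∀ S : Set α, S.Nonempty → ∃ a ∈ S, {b | b ∈ S ∧ H.Adj a b}.ncard ≤ k

/-- `G` is co-locally `s`-colourable: for all vertices `u ≠ v`,
`χ(G[{u} ∪ N(v)]) ≤ s`. -/
def CoLocallyColorable {V : Type*} (G : SimpleGraph V) (s : ℕ) : Prop :=
  ∀ v u : V, u ≠ v → chromNum (G.induce (insert u (G.neighborSet v))) ≤ s

/-- The minimum of `χ(G[X])` over all subsets `X ⊆ V(G)` spanning exactly `p` colours
of `σ` (a rainbow cover of `σ` when `σ` uses exactly `p` colours). -/
noncomputable def minRainbowChrom {V : Type*} (G : SimpleGraph V) (σ : V → ℕ) (p : ℕ) : ℕ :=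
  sInf {c : ℕ | ∃ X : Set V, (σ '' X).ncard = p ∧ c = chromNum (G.induce X)}

/-- `f_G(p)`: the maximum, over all proper colourings `σ` of `G` using exactly `p`
colours, of the minimum chromatic number of a rainbow cover of `σ`. -/
noncomputable def fG {V : Type*} (G : SimpleGraph V) (p : ℕ) : ℕ :=
  sSup {m : ℕ | ∃ σ : V → ℕ, IsProperColoring G σ ∧ (σ '' Set.univ).ncard = p ∧
    m = minRainbowChrom G σ p}

/-- The closed neighbourhood `N[X]` of a set `X` of vertices. -/
def closedNbhd {V : Type*} (G : SimpleGraph V) (X : Set V) : Set V :=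
  X ∪ {u : V | ∃ x ∈ X, G.Adj x u}

/-!
Induction on the number of vertices. Pick `u` of colour `c` whose closed neighbourhood sees the
largest set `S` of colours; if `S` is not every colour, let `W` be the vertices with colours
outside `S`. Then `χ(G) < χ(G[W]) + |S|`: otherwise keeping the colours in `S` and recolouring
`W` with `χ(G[W])` fresh colours gives a colouring with `χ(G)` colours, in which some vertex of
colour `c` sees every colour (else the class of `c` could be recoloured away); under `σ` that
vertex sees `S` and one more colour, contradicting the choice of `u`. Adding `u` to the set
obtained for `G[W]` costs one vertex while the excess `|σ(V)| - χ` drops by at least one.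
-/

section

variable {V : Type*} {G : SimpleGraph V}

lemma closedNbhd_mono {X Y : Set V} (h : X ⊆ Y) : closedNbhd G X ⊆ closedNbhd G Y := by
  rintro w (hw | ⟨x, hx, hadj⟩)
  · exact Or.inl (h hw)
  · exact Or.inr ⟨x, h hx, hadj⟩

lemma mem_closedNbhd_of_mem {X : Set V} {x : V} (hx : x ∈ X) : x ∈ closedNbhd G X :=
  Or.inl hx

lemma image_val_closedNbhd_induce_subset (W : Set V) (X : Set W) :
    Subtype.val '' closedNbhd (G.induce W) X ⊆ closedNbhd G (Subtype.val '' X) := by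
  rintro _ ⟨w, hw | ⟨x, hx, hadj⟩, rfl⟩
  · exact Or.inl ⟨w, hw, rfl⟩
  · exact Or.inr ⟨x, ⟨x, hx, rfl⟩, hadj⟩

lemma range_comp_val_setOf_notMem {β : Type*} (f : V → β) (S : Set β) :
    Set.range (f ∘ Subtype.val : {x | f x ∉ S} → β) = Set.range f \ S := by
  ext a
  constructor
  · rintro ⟨⟨x, hx⟩, rfl⟩
    exact ⟨⟨x, rfl⟩, hx⟩
  · rintro ⟨⟨x, rfl⟩, hx⟩
    exact ⟨⟨x, hx⟩, rfl⟩

lemma chromNum_le_of_colorable {n : ℕ} (h : G.Colorable n) : chromNum G ≤ n :=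
  Nat.sInf_le h

lemma colorable_chromNum [Finite V] (G : SimpleGraph V) : G.Colorable (chromNum G) := by
  have := Fintype.ofFinite V
  exact Nat.sInf_mem (s := {n | G.Colorable n}) ⟨_, G.colorable_of_fintype⟩

lemma IsProperColoring.colorable [Finite V] {σ : V → ℕ} (hσ : IsProperColoring G σ) :
    G.Colorable (Set.range σ).ncard := by
  have := Fintype.ofFinite (Set.range σ)
  rw [← Nat.card_coe_set_eq, Nat.card_eq_fintype_card]
  exact (Coloring.mk (Set.rangeFactorization σ)
    fun h heq => hσ h (congrArg Subtype.val heq)).colorable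

lemma IsProperColoring.chromNum_le [Finite V] {σ : V → ℕ} (hσ : IsProperColoring G σ) :
    chromNum G ≤ (Set.range σ).ncard :=
  chromNum_le_of_colorable hσ.colorable

-- The vertices of colour `c` are pairwise non-adjacent, so each can take any colour missing
-- from its closed neighbourhood.
lemma IsProperColoring.exists_recolor_of_forall_missing {σ : V → ℕ} (hσ : IsProperColoring G σ)
    {c : ℕ} (hmiss : ∀ u, σ u = c → ∃ a ∈ Set.range σ, a ∉ σ '' closedNbhd G {u}) :
    ∃ τ : V → ℕ, IsProperColoring G τ ∧ Set.range τ ⊆ Set.range σ \ {c} := by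
  classical
  choose f hf_mem hf_miss using hmiss
  let τ : V → ℕ := fun x => if hx : σ x = c then f x hx else σ x
  have hτ_miss : ∀ x (hx : σ x = c) y, y ∈ closedNbhd G {x} → τ x ≠ σ y := by
    intro x hx y hy heq
    exact hf_miss x hx ⟨y, hy, by simp only [τ, hx, dite_true] at heq; exact heq.symm⟩
  refine ⟨τ, fun x y hxy => ?_, ?_⟩
  · by_cases hx : σ x = c <;> by_cases hy : σ y = c
    · exact absurd (hx.trans hy.symm) (hσ hxy)
    · simpa only [τ, hy, dite_false] using hτ_miss x hx y (Or.inr ⟨x, rfl, hxy⟩)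
    · simpa only [τ, hx, dite_false] using (hτ_miss y hy x (Or.inr ⟨y, rfl, hxy.symm⟩)).symm
    · simpa only [τ, hx, hy, dite_false] using hσ hxy
  · rintro _ ⟨x, rfl⟩
    by_cases hx : σ x = c
    · refine ⟨by simpa only [τ, hx, dite_true] using hf_mem x hx, fun hτc => ?_⟩
      exact hτ_miss x hx x (mem_closedNbhd_of_mem rfl) (hτc.trans hx.symm)
    · simpa only [τ, hx, dite_false] using ⟨Set.mem_range_self x, hx⟩

lemma IsProperColoring.exists_image_closedNbhd_eq_range [Finite V] {σ : V → ℕ}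
    (hσ : IsProperColoring G σ) (hχ : (Set.range σ).ncard ≤ chromNum G) {c : ℕ}
    (hc : c ∈ Set.range σ) : ∃ u, σ u = c ∧ σ '' closedNbhd G {u} = Set.range σ := by
  by_contra! hnone
  obtain ⟨τ, hτ, hτ_range⟩ := hσ.exists_recolor_of_forall_missing fun u hu =>
    Set.exists_of_ssubset ((Set.image_subset_range _ _).ssubset_of_ne (hnone u hu))
  have hle := hτ.chromNum_le.trans (Set.ncard_le_ncard hτ_range)
  rw [Set.ncard_sdiff_singleton_of_mem hc] at hle
  have hpos : 0 < (Set.range σ).ncard := (Set.ncard_pos).2 ⟨c, hc⟩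
  omega

lemma IsProperColoring.exists_recolor_induce_compl {σ : V → ℕ} (hσ : IsProperColoring G σ)
    {S : Set ℕ} (hS : S.Finite) {m : ℕ} (ρ : (G.induce {x | σ x ∉ S}).Coloring (Fin m)) :
    ∃ τ : V → ℕ, IsProperColoring G τ ∧ (∀ x, σ x ∈ S → τ x = σ x) ∧
      (∀ x, σ x ∉ S → τ x ∉ S) ∧ (Set.range τ).ncard ≤ S.ncard + m := by
  classical
  obtain ⟨M, hM⟩ := hS.bddAbove
  let fresh : Fin m → ℕ := fun i => M + 1 + i
  let τ : V → ℕ := fun x => if hx : σ x ∈ S then σ x else fresh (ρ ⟨x, hx⟩)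
  have hfresh : ∀ i, fresh i ∉ S := fun i hi => by
    have := hM hi
    simp only [fresh] at this
    omega
  have hτ_out : ∀ x, σ x ∉ S → τ x ∉ S := fun x hx => by
    simpa only [τ, hx, dite_false] using hfresh _
  have hτ_in : ∀ x, σ x ∈ S → τ x = σ x := fun x hx => dif_pos hx
  refine ⟨τ, fun x y hxy => ?_, hτ_in, hτ_out, ?_⟩
  · by_cases hx : σ x ∈ S <;> by_cases hy : σ y ∈ S
    · rw [hτ_in x hx, hτ_in y hy]
      exact hσ hxy
    · exact fun h => hτ_out y hy (by rw [← h, hτ_in x hx]; exact hx)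
    · exact fun h => hτ_out x hx (by rw [h, hτ_in y hy]; exact hy)
    · simp only [τ, hx, hy, dite_false, fresh, ne_eq, add_right_inj, Fin.val_inj]
      exact ρ.valid hxy
  · have hsub : Set.range τ ⊆ S ∪ Set.range fresh := by
      rintro _ ⟨x, rfl⟩
      by_cases hx : σ x ∈ S
      · simp only [τ, hx, dite_true]
        exact Or.inl hx
      · simp only [τ, hx, dite_false]
        exact Or.inr (Set.mem_range_self _)
    have hinj : Function.Injective fresh := fun i j h => Fin.val_injective (by simpa [fresh] using h)
    calc (Set.range τ).ncard ≤ (S ∪ Set.range fresh).ncard :=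
          Set.ncard_le_ncard hsub (hS.union (Set.finite_range _))
      _ ≤ S.ncard + (Set.range fresh).ncard := Set.ncard_union_le _ _
      _ = S.ncard + m := by rw [Set.ncard_range_of_injective hinj, Nat.card_fin]

lemma IsProperColoring.chromNum_lt_chromNum_induce_add_ncard [Finite V] {σ : V → ℕ}
    (hσ : IsProperColoring G σ) {u : V}
    (hmax : ∀ v, σ v = σ u → (σ '' closedNbhd G {v}).ncard ≤ (σ '' closedNbhd G {u}).ncard)
    {z : V} (hz : σ z ∉ σ '' closedNbhd G {u}) :
    chromNum G < chromNum (G.induce {x | σ x ∉ σ '' closedNbhd G {u}}) +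
      (σ '' closedNbhd G {u}).ncard := by
  set S := σ '' closedNbhd G {u}
  by_contra! hle
  obtain ⟨ρ⟩ := colorable_chromNum (G.induce {x | σ x ∉ S})
  obtain ⟨τ, hτ, hτ_in, hτ_out, hτ_card⟩ := hσ.exists_recolor_induce_compl S.toFinite ρ
  have huS : σ u ∈ S := ⟨u, mem_closedNbhd_of_mem rfl, rfl⟩
  obtain ⟨v, hv, hfull⟩ :=
    hτ.exists_image_closedNbhd_eq_range (by omega) ⟨u, hτ_in u huS⟩
  have hvS : σ v ∈ S := by_contra fun h => hτ_out v h (hv ▸ huS)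
  have hσv : σ v = σ u := (hτ_in v hvS).symm.trans hv
  have hS_sub : S ⊆ σ '' closedNbhd G {v} := by
    rintro _ ⟨y, hy, rfl⟩
    have hyS : σ y ∈ S := ⟨y, hy, rfl⟩
    obtain ⟨w, hw, hτw⟩ : τ y ∈ τ '' closedNbhd G {v} := hfull ▸ Set.mem_range_self y
    have hwS : σ w ∈ S := by_contra fun h => hτ_out w h (hτw ▸ hτ_in y hyS ▸ hyS)
    exact ⟨w, hw, (hτ_in w hwS).symm.trans (hτw.trans (hτ_in y hyS))⟩
  obtain ⟨w, hw, hτw⟩ : τ z ∈ τ '' closedNbhd G {v} := hfull ▸ Set.mem_range_self z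
  have hwS : σ w ∉ S := fun h => hτ_out z hz (by rw [← hτw, hτ_in w h]; exact h)
  have hmore := Set.ncard_le_ncard (Set.insert_subset (Set.mem_image_of_mem σ hw) hS_sub)
  rw [Set.ncard_insert_of_notMem hwS] at hmore
  have := hmax v hσv
  omega

theorem IsProperColoring.exists_rainbow_closedNbhd [Finite V] {σ : V → ℕ}
    (hσ : IsProperColoring G σ) {c : ℕ} (hc : c ∈ Set.range σ) :
    ∃ X : Set V, X.ncard + chromNum G ≤ (Set.range σ).ncard + 1 ∧ (∃ x ∈ X, σ x = c) ∧
      σ '' closedNbhd G X = Set.range σ := by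
  induction h : Nat.card V using Nat.strong_induction_on generalizing V c with
  | _ n ih =>
  obtain ⟨x₀, rfl⟩ := hc
  obtain ⟨u, hu, hmax⟩ := Set.exists_max_image {v | σ v = σ x₀}
    (fun v => (σ '' closedNbhd G {v}).ncard) (Set.toFinite _) ⟨x₀, rfl⟩
  set S := σ '' closedNbhd G {u}
  have hS_sub : S ⊆ Set.range σ := Set.image_subset_range _ _
  by_cases hfull : S = Set.range σ
  · refine ⟨{u}, ?_, ⟨u, rfl, hu⟩, hfull⟩
    have := hσ.chromNum_le
    rw [Set.ncard_singleton]
    omega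
  obtain ⟨_, ⟨z, rfl⟩, hz⟩ := Set.exists_of_ssubset (hS_sub.ssubset_of_ne hfull)
  set W := {x | σ x ∉ S}
  have hrich : chromNum G < chromNum (G.induce W) + S.ncard :=
    hσ.chromNum_lt_chromNum_induce_add_ncard (fun v hv => hmax v (hv.trans hu)) hz
  have hW_card : Nat.card W < n := h ▸ Finite.card_subtype_lt (p := (· ∈ W)) fun hu' =>
    hu' ⟨u, mem_closedNbhd_of_mem rfl, rfl⟩
  obtain ⟨X₀, hX₀_card, -, hX₀_cov⟩ := ih _ hW_card (G := G.induce W) (σ := σ ∘ Subtype.val)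
    (c := σ z) (fun _ _ hab => hσ hab) ⟨⟨z, hz⟩, rfl⟩ rfl
  have hW_range := range_comp_val_setOf_notMem σ S
  refine ⟨insert u (Subtype.val '' X₀), ?_, ⟨u, Set.mem_insert _ _, hu⟩, ?_⟩
  · have h₁ := Set.ncard_insert_le u (Subtype.val '' X₀)
    rw [Set.ncard_image_of_injective _ Subtype.val_injective] at h₁
    rw [hW_range, Set.ncard_sdiff hS_sub] at hX₀_card
    have := Set.ncard_le_ncard hS_sub
    omega
  · refine (Set.image_subset_range _ _).antisymm fun a ha => ?_
    by_cases haS : a ∈ S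
    · exact Set.image_mono (closedNbhd_mono (Set.singleton_subset_iff.2 (Set.mem_insert _ _))) haS
    · have ha₀ : a ∈ (σ ∘ Subtype.val) '' closedNbhd (G.induce W) X₀ :=
        hX₀_cov ▸ hW_range ▸ ⟨ha, haS⟩
      rw [Set.image_comp] at ha₀
      exact Set.image_mono ((image_val_closedNbhd_induce_subset W X₀).trans
        (closedNbhd_mono (Set.subset_insert _ _))) ha₀

end

theorem rainbow_closed_neighbourhood_general {V : Type*} [Fintype V]
    (G : SimpleGraph V) (k : ℕ) (σ : V → ℕ) (hσ : IsProperColoring G σ)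
    (hp : (σ '' Set.univ).ncard = chromNum G + k) :
    ∀ c ∈ σ '' Set.univ, ∃ X : Set V, X.ncard ≤ k + 1 ∧ (∃ x ∈ X, σ x = c) ∧
      (σ '' closedNbhd G X).ncard = chromNum G + k := by
  rw [Set.image_univ] at hp ⊢
  intro c hc
  obtain ⟨X, hX_card, hX_c, hX_cov⟩ := hσ.exists_rainbow_closedNbhd hc
  exact ⟨X, by omega, hX_c, hX_cov ▸ hp⟩

/-- Let `G` be a finite graph with at least one vertex, `k ≥ 0`,
`p = χ(G)+k`, and `σ` a proper colouring of `G` using exactly `p` colours. Then for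
every colour class of `σ` (given by a colour `c` used by `σ`) there exists
`X ⊆ V(G)` with `|X| ≤ k+1`, meeting that colour class, such that `N[X]` meets every
colour class, i.e. `|σ(N[X])| = p`. -/
theorem rainbow_closed_neighbourhood {V : Type*} [Fintype V] [Nonempty V]
    (G : SimpleGraph V) (k : ℕ) (σ : V → ℕ) (hσ : IsProperColoring G σ)
    (hp : (σ '' Set.univ).ncard = chromNum G + k) :
    ∀ c ∈ σ '' Set.univ, ∃ X : Set V, X.ncard ≤ k + 1 ∧ (∃ x ∈ X, σ x = c) ∧
      (σ '' closedNbhd G X).ncard = chromNum G + k :=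
  rainbow_closed_neighbourhood_general G k σ hσ hp
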